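/- arXiv:1708.03340 — 4 statements merged into one kernel-verified Lean document; each statement's English description precedes it below -/
import Mathlib

section
/- Let I₁, I₂, J be finite index sets and A ∈ ℝ^{I₁×I₂×J}. Suppose the matricization M₁₂(A) ∈ ℝ^{(I₁×I₂)×J} (rows indexed by (a,b), columns by c, entry A_{a,b,c}) factors as M₁₂(A) = U Vᵀ, where V ∈ ℝ^{J×k} and U ∈ ℝ^{(I₁×I₂)×k} is the transfer combination of (U₁, U₂) by B ∈ ℝ^{k×k₁×k₂} with U₂ ∈ ℝ^{I₂×k₂} having orthonormal columns. Define V₁ ∈ ℝ^{(I₂×J)×k₁} by (V₁)_{(b,c),p} = Σ_{i=1}^{k} Σ_{ℓ=1}^{k₂} B_{i,p,ℓ} (U₂)_{b,ℓ} V_{c,i}. Then the matricization M₁(A) ∈ ℝ^{I₁×(I₂×J)} (rows indexed by a, columns by (b,c), entry A_{a,b,c}) satisfies M₁(A) = U₁ V₁ᵀ, and the Gram matrix of V₁ is given by (V₁ᵀ V₁)_{p,q} = Σ_{i₁=1}^{k} Σ_{i₂=1}^{k} Σ_{ℓ=1}^{k₂} B_{i₁,p,ℓ} (Vᵀ V)_{i₁,i₂}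 B_{i₂,q,ℓ}. -/
/-!
Both claims are reshapings of `M₁₂(A) = U Vᵀ`. For the Gram matrix, `V₁ = (U₂ ⊗ₖ V) C` with
`C (ℓ, i) p = B i p ℓ`, so `V₁ᵀ V₁ = Cᵀ ((U₂ᵀ U₂) ⊗ₖ (Vᵀ V)) C`, and orthonormality of `U₂`
collapses the middle factor to `1 ⊗ₖ (Vᵀ V)`, i.e. to a sum over a single `ℓ`.
-/

open Matrix BigOperators
open scoped Kronecker

section

variable {R : Type*} [CommSemiring R]

theorem sum_transfer_mul_eq_sum_mul_sum {ι₁ ι₂ J m n κ : Type*}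
    [Fintype m] [Fintype n] [Fintype κ]
    (B : κ → m → n → R) (U₁ : Matrix ι₁ m R) (U₂ : Matrix ι₂ n R) (V : Matrix J κ R)
    (a : ι₁) (b : ι₂) (c : J) :
    ∑ i, (∑ j, ∑ ℓ, B i j ℓ * U₁ a j * U₂ b ℓ) * V c i =
      ∑ j, U₁ a j * ∑ i, ∑ ℓ, B i j ℓ * U₂ b ℓ * V c i := by
  simp only [Finset.sum_mul, Finset.mul_sum]
  rw [Finset.sum_comm]
  exact Fintype.sum_congr _ _ fun j => Fintype.sum_congr _ _ fun i =>
    Fintype.sum_congr _ _ fun ℓ => by ring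

theorem Matrix.gram_kronecker_mul {ι J n κ m : Type*} [Fintype ι] [Fintype J] [Fintype n]
    [Fintype κ] [DecidableEq n]
    {W : Matrix ι n R} (hW : Wᵀ * W = 1) (V : Matrix J κ R) (C : Matrix (n × κ) m R) :
    ((W ⊗ₖ V) * C)ᵀ * ((W ⊗ₖ V) * C) = Cᵀ * ((1 : Matrix n n R) ⊗ₖ (Vᵀ * V)) * C := by
  rw [transpose_mul, ← kroneckerMap_transpose, Matrix.mul_assoc, ← Matrix.mul_assoc (Wᵀ ⊗ₖ Vᵀ),
    ← mul_kronecker_mul, hW, Matrix.mul_assoc]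

theorem Matrix.transpose_mul_one_kronecker_mul_apply {n κ m o : Type*} [Fintype n] [Fintype κ]
    [DecidableEq n] (C : Matrix (n × κ) m R) (G : Matrix κ κ R) (D : Matrix (n × κ) o R)
    (p : m) (q : o) :
    (Cᵀ * ((1 : Matrix n n R) ⊗ₖ G) * D) p q =
      ∑ i₁, ∑ i₂, ∑ ℓ, C (ℓ, i₁) p * G i₁ i₂ * D (ℓ, i₂) q := by
  simp only [mul_apply, transpose_apply, kroneckerMap_apply, one_apply, ite_mul, one_mul, zero_mul,
    mul_ite, mul_zero, Fintype.sum_prod_type, Finset.sum_ite_irrel, Finset.sum_const_zero,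
    Finset.sum_ite_eq', Finset.mem_univ, if_true, Finset.sum_mul]
  exact (Fintype.sum_congr _ _ fun _ => Finset.sum_comm).trans <|
    Finset.sum_comm.trans <| Fintype.sum_congr _ _ fun _ => Finset.sum_comm

end

/-- the recursion passing the Gram matrices `B̂_t = V_tᵀ V_t`
from a node to its first son in the Hierarchical SVD. -/
theorem hsvd_gram_recursion
    {ι₁ ι₂ J : Type*} [Fintype ι₁] [Fintype ι₂] [Fintype J]
    {k k₁ k₂ : ℕ}
    (A : ι₁ → ι₂ → J → ℝ)
    (U₁ : Matrix ι₁ (Fin k₁) ℝ) (U₂ : Matrix ι₂ (Fin k₂) ℝ)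
    (hU₂ : U₂ᵀ * U₂ = 1)
    (B : Fin k → Fin k₁ → Fin k₂ → ℝ)
    (U : Matrix (ι₁ × ι₂) (Fin k) ℝ)
    (hU : ∀ (a : ι₁) (b : ι₂) (i : Fin k),
      U (a, b) i = ∑ j, ∑ ℓ, B i j ℓ * U₁ a j * U₂ b ℓ)
    (V : Matrix J (Fin k) ℝ)
    (hfact : ∀ (a : ι₁) (b : ι₂) (c : J),
      A a b c = ∑ i, U (a, b) i * V c i)
    (V₁ : Matrix (ι₂ × J) (Fin k₁) ℝ)
    (hV₁ : ∀ (b : ι₂) (c : J) (p : Fin k₁),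
      V₁ (b, c) p = ∑ i, ∑ ℓ, B i p ℓ * U₂ b ℓ * V c i) :
    (∀ (a : ι₁) (b : ι₂) (c : J), A a b c = ∑ p, U₁ a p * V₁ (b, c) p) ∧
      ∀ (p q : Fin k₁),
        (V₁ᵀ * V₁) p q =
          ∑ i₁, ∑ i₂, ∑ ℓ, B i₁ p ℓ * (Vᵀ * V) i₁ i₂ * B i₂ q ℓ := by
  have hV₁_eq : V₁ = (U₂ ⊗ₖ V) * of fun (ℓ, i) p => B i p ℓ := by
    ext ⟨b, c⟩ p
    rw [hV₁, mul_apply, Fintype.sum_prod_type, Finset.sum_comm]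
    exact Fintype.sum_congr _ _ fun i => Fintype.sum_congr _ _ fun ℓ => by
      simp only [kroneckerMap_apply, of_apply]
      ring
  refine ⟨fun a b c => ?_, fun p q => ?_⟩
  · simp only [hfact, hU, hV₁, sum_transfer_mul_eq_sum_mul_sum]
  · rw [hV₁_eq, gram_kronecker_mul hU₂, transpose_mul_one_kronecker_mul_apply]
    rfl
end

section
/- Let A ∈ ℝ^{n×n} be a symmetric positive definite matrix with smallest eigenvalue λ_min > 0 and largest eigenvalue λ_max, let κ = λ_max/λ_min and γ = (κ−1)/(κ+1), and let ‖v‖_A = √⟨v, A v⟩ denote the A-norm on ℝⁿ and ‖·‖ the Euclidean norm. Let X ∈ ℝⁿ, let C : ℝⁿ → ℝⁿ satisfy ‖X − C(Y)‖_A ≤ γ ‖X − Y‖_A for all Y ∈ ℝⁿ, and let ε > 0 and T : ℝⁿ → ℝⁿ satisfy ‖Z − T(Z)‖ ≤ ε for all Z ∈ ℝⁿ. Then for every δ > 0 and every X₀ ∈ ℝⁿ, if ε < δ / (√λ_max (κ+1)), there exists j ∈ ℕ such that ‖X − (T∘C)^j(X₀)‖_A < δ. -/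
/-!
The A-norm error `e j` of the `j`-th iterate satisfies `e (j + 1) ≤ γ e j + √λ_max ε`: the exact
step contracts by `γ`, and the truncation error, at most `ε` in the Euclidean norm, is at most
`√λ_max ε` in the A-norm. Hence `e j - d / (1 - γ)` decays like `γ ^ j` for `d = √λ_max ε`, and
`d / (1 - γ) = √λ_max ε (κ + 1) / 2 < δ / 2`.
-/

open Matrix Filter Topology

namespace Matrix

variable {n : Type*} [Fintype n]

theorem PosSemidef.sqrt_dotProduct_mulVec_add_le {A : Matrix n n ℝ} (hA : A.PosSemidef)
    (x y : n → ℝ) :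
    √((x + y) ⬝ᵥ A *ᵥ (x + y)) ≤ √(x ⬝ᵥ A *ᵥ x) + √(y ⬝ᵥ A *ᵥ y) := by
  have hnorm (v : n → ℝ) :
      @norm _ (A.toSeminormedAddCommGroup hA).toNorm v = √(v ⬝ᵥ A *ᵥ v) :=
    (@norm_eq_sqrt_re_inner ℝ _ _ (A.toSeminormedAddCommGroup hA) (A.toInnerProductSpace hA)
      v).trans (congrArg _ (dotProduct_comm _ _))
  simpa only [hnorm] using
    @norm_add_le _ (A.toSeminormedAddCommGroup hA).toSeminormedAddGroup x y

open scoped MatrixOrder in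
theorem IsHermitian.dotProduct_mulVec_le [DecidableEq n] {A : Matrix n n ℝ} (hA : A.IsHermitian)
    {c : ℝ} (hc : ∀ i, hA.eigenvalues i ≤ c) (v : n → ℝ) :
    v ⬝ᵥ A *ᵥ v ≤ c * (v ⬝ᵥ v) := by
  have hle : A ≤ algebraMap ℝ _ c := le_algebraMap_of_spectrum_le <| by
    rw [hA.spectrum_real_eq_range_eigenvalues]
    rintro _ ⟨i, rfl⟩
    exact hc i
  simpa only [algebraMap_eq_diagonal, Pi.algebraMap_def, Algebra.algebraMap_self,
    RingHom.id_apply, star_trivial, sub_mulVec, diagonal_const_mulVec, dotProduct_sub,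
    dotProduct_smul, smul_eq_mul, sub_nonneg] using (le_iff.mp hle).dotProduct_mulVec_nonneg v

end Matrix

theorem exists_lt_of_succ_le_mul_add {e : ℕ → ℝ} {γ d δ : ℝ} (hγ0 : 0 ≤ γ) (hγ1 : γ < 1)
    (he : ∀ j, e (j + 1) ≤ γ * e j + d) (hδ : d / (1 - γ) < δ) : ∃ j, e j < δ := by
  set r := d / (1 - γ)
  have hfix : γ * r + d = r := by
    simp only [r]
    field_simp [(sub_pos.2 hγ1).ne']
    ring
  have hdecay (j : ℕ) : e j - r ≤ γ ^ j * (e 0 - r) := by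
    induction j with
    | zero => simp
    | succ j ih =>
      calc e (j + 1) - r ≤ γ * (e j - r) := by linarith [he j]
        _ ≤ γ * (γ ^ j * (e 0 - r)) := mul_le_mul_of_nonneg_left ih hγ0
        _ = γ ^ (j + 1) * (e 0 - r) := by ring
  have hlim : Tendsto (fun j ↦ γ ^ j * (e 0 - r)) atTop (𝓝 0) := by
    simpa using (tendsto_pow_atTop_nhds_zero_of_lt_one hγ0 hγ1).mul_const (e 0 - r)
  obtain ⟨j, hj⟩ := (hlim.eventually (gt_mem_nhds (sub_pos.2 hδ))).exists
  exact ⟨j, by linarith [hdecay j]⟩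

theorem exists_iterate_perturbed_contraction_lt {E : Type*} [AddGroup E] (N : E → ℝ)
    (hN : ∀ a b, N (a + b) ≤ N a + N b) {X : E} {C T : E → E} {γ d δ : ℝ}
    (hγ0 : 0 ≤ γ) (hγ1 : γ < 1) (hC : ∀ Y, N (X - C Y) ≤ γ * N (X - Y))
    (hT : ∀ Z, N (Z - T Z) ≤ d) (hδ : d / (1 - γ) < δ) (X₀ : E) :
    ∃ j, N (X - (T ∘ C)^[j] X₀) < δ := by
  refine exists_lt_of_succ_le_mul_add hγ0 hγ1 (fun j ↦ ?_) hδ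
  set Y := (T ∘ C)^[j] X₀
  calc N (X - (T ∘ C)^[j + 1] X₀) = N ((X - C Y) + (C Y - T (C Y))) := by
        rw [Function.iterate_succ_apply', sub_add_sub_cancel]; rfl
    _ ≤ γ * N (X - Y) + d := (hN _ _).trans (add_le_add (hC Y) (hT (C Y)))

theorem perturbed_cg_convergence_general
    {n : ℕ}
    (A : Matrix (Fin n) (Fin n) ℝ) (hA : A.PosDef)
    (lmin lmax : ℝ)
    (hmin : IsLeast (Set.range hA.isHermitian.eigenvalues) lmin)
    (hmax : IsGreatest (Set.range hA.isHermitian.eigenvalues) lmax)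
    (hlmin : 0 < lmin)
    (κ γ : ℝ) (hκ : κ = lmax / lmin) (hγ : γ = (κ - 1) / (κ + 1))
    (normA : (Fin n → ℝ) → ℝ)
    (hnormA : ∀ v, normA v = Real.sqrt (v ⬝ᵥ A.mulVec v))
    (norm2 : (Fin n → ℝ) → ℝ)
    (hnorm2 : ∀ v, norm2 v = Real.sqrt (v ⬝ᵥ v))
    (X : Fin n → ℝ) (C : (Fin n → ℝ) → (Fin n → ℝ))
    (hC : ∀ Y, normA (X - C Y) ≤ γ * normA (X - Y))
    (ε : ℝ) (T : (Fin n → ℝ) → (Fin n → ℝ))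
    (hT : ∀ Z, norm2 (Z - T Z) ≤ ε)
    (δ : ℝ) (hδ : 0 < δ) (X₀ : Fin n → ℝ)
    (hεδ : ε < δ / (Real.sqrt lmax * (κ + 1))) :
    ∃ j : ℕ, normA (X - (T ∘ C)^[j] X₀) < δ := by
  have hminmax : lmin ≤ lmax := hmax.2 hmin.1
  have hκ1 : 1 ≤ κ := hκ ▸ (one_le_div hlmin).mpr hminmax
  have hγ0 : 0 ≤ γ := hγ ▸ div_nonneg (by linarith) (by linarith)
  have hγ1 : γ < 1 := hγ ▸ (div_lt_one (by linarith)).mpr (by linarith)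
  have hnormA_add (a b : Fin n → ℝ) : normA (a + b) ≤ normA a + normA b := by
    simpa only [hnormA] using hA.posSemidef.sqrt_dotProduct_mulVec_add_le a b
  have hnormA_le (v : Fin n → ℝ) : normA v ≤ √lmax * norm2 v := by
    rw [hnormA, hnorm2, ← Real.sqrt_mul (hlmin.trans_le hminmax).le]
    exact Real.sqrt_le_sqrt (hA.isHermitian.dotProduct_mulVec_le (fun i ↦ hmax.2 ⟨i, rfl⟩) v)
  have hT_A (Z : Fin n → ℝ) : normA (Z - T Z) ≤ √lmax * ε :=
    (hnormA_le _).trans (mul_le_mul_of_nonneg_left (hT Z) (Real.sqrt_nonneg _))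
  refine exists_iterate_perturbed_contraction_lt normA hnormA_add hγ0 hγ1 hC hT_A ?_ X₀
  have hscale : 0 < √lmax * (κ + 1) :=
    mul_pos (Real.sqrt_pos.2 (hlmin.trans_le hminmax)) (by linarith)
  have hεscaled : ε * (√lmax * (κ + 1)) < δ := (lt_div_iff₀ hscale).mp hεδ
  calc √lmax * ε / (1 - γ) = ε * (√lmax * (κ + 1)) / 2 := by
        rw [hγ]
        field_simp
        ring
    _ < δ / 2 := by linarith
    _ < δ := half_lt_self hδ

/-- Lemma 4 of the paper: convergence of the CG algorithm
including truncation. `C` is one exact CG step (a contraction toward the exact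
solution `X` in the `A`-norm with rate `γ = (κ−1)/(κ+1)`) and `T` is a
truncation with Euclidean error at most `ε`; if `ε < δ/(√λ_max (κ+1))` then
the perturbed iteration reaches accuracy `δ` in the `A`-norm. -/
theorem perturbed_cg_convergence
    {n : ℕ}
    (A : Matrix (Fin n) (Fin n) ℝ) (hA : A.PosDef)
    (lmin lmax : ℝ)
    (hmin : IsLeast (Set.range hA.isHermitian.eigenvalues) lmin)
    (hmax : IsGreatest (Set.range hA.isHermitian.eigenvalues) lmax)
    (hlmin : 0 < lmin)
    (κ γ : ℝ) (hκ : κ = lmax / lmin) (hγ : γ = (κ - 1) / (κ + 1))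
    (normA : (Fin n → ℝ) → ℝ)
    (hnormA : ∀ v, normA v = Real.sqrt (v ⬝ᵥ A.mulVec v))
    (norm2 : (Fin n → ℝ) → ℝ)
    (hnorm2 : ∀ v, norm2 v = Real.sqrt (v ⬝ᵥ v))
    (X : Fin n → ℝ) (C : (Fin n → ℝ) → (Fin n → ℝ))
    (hC : ∀ Y, normA (X - C Y) ≤ γ * normA (X - Y))
    (ε : ℝ) (hε : 0 < ε) (T : (Fin n → ℝ) → (Fin n → ℝ))
    (hT : ∀ Z, norm2 (Z - T Z) ≤ ε)
    (δ : ℝ) (hδ : 0 < δ) (X₀ : Fin n → ℝ)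
    (hεδ : ε < δ / (Real.sqrt lmax * (κ + 1))) :
    ∃ j : ℕ, normA (X - (T ∘ C)^[j] X₀) < δ :=
  perturbed_cg_convergence_general A hA lmin lmax hmin hmax hlmin κ γ hκ hγ normA hnormA norm2
    hnorm2 X C hC ε T hT δ hδ X₀ hεδ
end

section
/- Let A ∈ ℝ^{n×n} be symmetric positive definite with largest eigenvalue λ_max, let γ ∈ [0,1), and let ‖v‖_A = √⟨v, Av⟩. Let X ∈ ℝⁿ, let C : ℝⁿ → ℝⁿ satisfy ‖X − C(Y)‖_A ≤ γ ‖X − Y‖_A for all Y, and let ε > 0 and T : ℝⁿ → ℝⁿ satisfy ‖Z − T(Z)‖ ≤ ε for all Z, where ‖·‖ is the Euclidean norm. Then for every X₀ ∈ ℝⁿ and every j ∈ ℕ, ‖X − (T∘C)^j(X₀)‖_A ≤ γ^j ‖X − X₀‖_A + ε √λ_max · Σ_{ℓ=0}^{j−1} γ^ℓ ≤ γ^j ‖X − X₀‖_A + ε √λ_max (1−γ)^{−1}. -/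
/-!
One step of `T ∘ C` moves the `A`-norm error from `e` to at most `γ e + ε √λ_max`: the contraction
accounts for `γ e`, and the perturbation of Euclidean size at most `ε` has `A`-norm at most
`ε √λ_max`, since `A ≤ λ_max • 1` in the Loewner order. Iterating this affine recursion `j` times
gives the geometric sum, which is at most `(1 - γ)⁻¹`.
-/

theorem Function.iterate_le_pow_mul_add_geom_sum {α : Type*} {f : α → α} {e : α → ℝ} {γ δ : ℝ}
    (hγ : 0 ≤ γ) (hf : ∀ z, e (f z) ≤ γ * e z + δ) (z : α) (j : ℕ) :
    e (f^[j] z) ≤ γ ^ j * e z + δ * ∑ ℓ ∈ Finset.range j, γ ^ ℓ := by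
  induction j with
  | zero => simp
  | succ k ih =>
    calc e (f^[k + 1] z) = e (f (f^[k] z)) := by rw [Function.iterate_succ_apply']
      _ ≤ γ * e (f^[k] z) + δ := hf _
      _ ≤ γ * (γ ^ k * e z + δ * ∑ ℓ ∈ Finset.range k, γ ^ ℓ) + δ := by gcongr
      _ = γ ^ (k + 1) * e z + δ * ∑ ℓ ∈ Finset.range (k + 1), γ ^ ℓ := by
        rw [geom_sum_succ]; ring

namespace Matrix

variable {ι : Type*} [Fintype ι]

theorem PosSemidef.sqrt_dotProduct_mulVec_add_le_s11 {M : Matrix ι ι ℝ} (hM : M.PosSemidef)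
    (u v : ι → ℝ) :
    √((u + v) ⬝ᵥ M *ᵥ (u + v)) ≤ √(u ⬝ᵥ M *ᵥ u) + √(v ⬝ᵥ M *ᵥ v) := by
  let E := M.toSeminormedAddCommGroup hM
  have hnorm : ∀ x : ι → ℝ, @norm _ E.toNorm x = √(x ⬝ᵥ M *ᵥ x) := fun x => by
    show √(RCLike.re ((M *ᵥ x) ⬝ᵥ star x)) = _
    rw [dotProduct_comm]
    rfl
  simpa only [hnorm] using @norm_add_le _ E.toSeminormedAddGroup u v

open scoped MatrixOrder in
theorem IsHermitian.dotProduct_mulVec_le_s11 [DecidableEq ι] {M : Matrix ι ι ℝ} (hM : M.IsHermitian)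
    {c : ℝ} (hc : ∀ i, hM.eigenvalues i ≤ c) (v : ι → ℝ) :
    v ⬝ᵥ M *ᵥ v ≤ c * (v ⬝ᵥ v) := by
  have hle : M ≤ algebraMap ℝ _ c := by
    refine le_algebraMap_of_spectrum_le (fun x hx => ?_) hM
    rw [hM.spectrum_real_eq_range_eigenvalues] at hx
    obtain ⟨i, rfl⟩ := hx
    exact hc i
  simpa only [Algebra.algebraMap_eq_smul_one, sub_mulVec, smul_mulVec, one_mulVec, dotProduct_sub,
    dotProduct_smul, smul_eq_mul, star_trivial, sub_nonneg] using
    (le_iff.mp hle).dotProduct_mulVec_nonneg v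

theorem IsHermitian.sqrt_dotProduct_mulVec_le [DecidableEq ι] {M : Matrix ι ι ℝ}
    (hM : M.IsHermitian) {c : ℝ} (hc : ∀ i, hM.eigenvalues i ≤ c) (v : ι → ℝ) :
    √(v ⬝ᵥ M *ᵥ v) ≤ √c * √(v ⬝ᵥ v) := by
  rw [← Real.sqrt_mul' c (y := v ⬝ᵥ v) (Fintype.sum_nonneg fun i => mul_self_nonneg (v i))]
  exact Real.sqrt_le_sqrt (hM.dotProduct_mulVec_le_s11 hc v)

end Matrix

/-- the accumulated error bound for `j` perturbed iteration
steps from the proof of Lemma 4: `C` contracts toward `X` in the `A`-norm with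
rate `γ ∈ [0,1)` and `T` perturbs each iterate by at most `ε` in the Euclidean
norm. -/
theorem perturbed_iteration_error_bound
    {n : ℕ}
    (A : Matrix (Fin n) (Fin n) ℝ) (hA : A.PosDef)
    (lmax : ℝ)
    (hmax : IsGreatest (Set.range hA.isHermitian.eigenvalues) lmax)
    (γ : ℝ) (hγ0 : 0 ≤ γ) (hγ1 : γ < 1)
    (normA : (Fin n → ℝ) → ℝ)
    (hnormA : ∀ v, normA v = Real.sqrt (v ⬝ᵥ A.mulVec v))
    (norm2 : (Fin n → ℝ) → ℝ)
    (hnorm2 : ∀ v, norm2 v = Real.sqrt (v ⬝ᵥ v))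
    (X : Fin n → ℝ) (C : (Fin n → ℝ) → (Fin n → ℝ))
    (hC : ∀ Y, normA (X - C Y) ≤ γ * normA (X - Y))
    (ε : ℝ) (hε : 0 < ε) (T : (Fin n → ℝ) → (Fin n → ℝ))
    (hT : ∀ Z, norm2 (Z - T Z) ≤ ε) :
    ∀ (X₀ : Fin n → ℝ) (j : ℕ),
      normA (X - (T ∘ C)^[j] X₀) ≤
          γ ^ j * normA (X - X₀) +
            ε * Real.sqrt lmax * ∑ ℓ ∈ Finset.range j, γ ^ ℓ ∧
        γ ^ j * normA (X - X₀) +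
            ε * Real.sqrt lmax * ∑ ℓ ∈ Finset.range j, γ ^ ℓ ≤
          γ ^ j * normA (X - X₀) + ε * Real.sqrt lmax * (1 - γ)⁻¹ := by
  have hnormA_add : ∀ u v, normA (u + v) ≤ normA u + normA v := fun u v => by
    simpa only [hnormA] using hA.posSemidef.sqrt_dotProduct_mulVec_add_le_s11 u v
  have hnormA_le : ∀ v, normA v ≤ √lmax * norm2 v := fun v => by
    simpa only [hnormA, hnorm2] using
      hA.isHermitian.sqrt_dotProduct_mulVec_le (fun i => hmax.2 ⟨i, rfl⟩) v
  have hstep : ∀ Z, normA (X - (T ∘ C) Z) ≤ γ * normA (X - Z) + ε * √lmax := fun Z =>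
    calc normA (X - T (C Z)) = normA ((X - C Z) + (C Z - T (C Z))) := by
          rw [sub_add_sub_cancel]
      _ ≤ normA (X - C Z) + normA (C Z - T (C Z)) := hnormA_add _ _
      _ ≤ γ * normA (X - Z) + √lmax * ε := by
          gcongr
          exacts [hC Z, (hnormA_le _).trans (by gcongr; exact hT _)]
      _ = γ * normA (X - Z) + ε * √lmax := by ring
  intro X₀ j
  refine ⟨Function.iterate_le_pow_mul_add_geom_sum (e := fun Z => normA (X - Z)) hγ0 hstep X₀ j, ?_⟩
  have hgeom := geom_sum_Ico_le_of_lt_one (m := 0) (n := j) hγ0 hγ1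
  rw [← Finset.range_eq_Ico, pow_zero, one_div] at hgeom
  gcongr
end

section
/- Let I₁, I₂, J be finite index sets and A ∈ ℝ^{I₁×I₂×J}. Denote by M₁(A) ∈ ℝ^{I₁×(I₂×J)}, M₂(A) ∈ ℝ^{I₂×(I₁×J)} and M₁₂(A) ∈ ℝ^{(I₁×I₂)×J} the matricizations of A with entries A_{a,b,c} indexed so that the row index is a, b, and (a,b) respectively. Suppose U₁ ∈ ℝ^{I₁×k₁} satisfies range(U₁) ⊇ range(M₁(A)) (the column space of U₁ contains that of M₁(A)) and U₂ ∈ ℝ^{I₂×k₂} satisfies range(U₂) ⊇ range(M₂(A)). Then every column of M₁₂(A) lies in the span of the Kronecker products of columns of U₁ with columns of U₂; consequently, for any matrix U ∈ ℝ^{(I₁×I₂)×k} with range(U) ⊆ range(M₁₂(A)) there exists a coefficient array B ∈ ℝ^{k×k₁×k₂} such that U is the transfer combination of (U₁, U₂) by B, i.e. U_{(a,b),i} = Σ_{j=1}^{k₁} Σ_{ℓ=1}^{k₂} B_{i,j,ℓ} (U₁)_{a,j} (U₂)_{b,ℓ} for all (a,b) and i. -/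
open Matrix BigOperators

lemma exists_retraction {n : Type*} [Fintype n] {κ : ℕ} (U : Matrix n (Fin κ) ℝ) :
    ∃ G : (n → ℝ) →ₗ[ℝ] (Fin κ → ℝ),
      ∀ x ∈ LinearMap.range U.mulVecLin, U.mulVec (G x) = x := by
  have hsurj : LinearMap.range (U.mulVecLin.rangeRestrict) = ⊤ :=
    LinearMap.range_rangeRestrict _
  obtain ⟨s, hs⟩ := (U.mulVecLin.rangeRestrict).exists_rightInverse_of_surjective hsurj
  obtain ⟨G, hG⟩ := LinearMap.exists_extend s
  refine ⟨G, fun x hx => ?_⟩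
  have h1 : G x = s ⟨x, hx⟩ := by
    have := congrArg (fun f => f ⟨x, hx⟩) hG
    simpa using this
  have h2 := congrArg (fun f => ((f ⟨x, hx⟩ : _) : n → ℝ)) hs
  simp only [LinearMap.comp_apply, LinearMap.id_apply] at h2
  rw [h1]
  simpa [LinearMap.rangeRestrict, Matrix.mulVecLin_apply] using h2

/-- Key factorization: a matrix whose columns lie in the column space of `U₁`
and whose rows lie in the column space of `U₂` factors as `U₁ D U₂ᵀ`. -/
lemma key_factor {ι₁ ι₂ : Type*} [Fintype ι₁] [DecidableEq ι₁] [Fintype ι₂] {k₁ k₂ : ℕ}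
    (U₁ : Matrix ι₁ (Fin k₁) ℝ) (U₂ : Matrix ι₂ (Fin k₂) ℝ)
    (M : ι₁ → ι₂ → ℝ)
    (hcol : ∀ b, (fun a => M a b) ∈ LinearMap.range U₁.mulVecLin)
    (hrow : ∀ a, (fun b => M a b) ∈ LinearMap.range U₂.mulVecLin) :
    ∃ D : Fin k₁ → Fin k₂ → ℝ,
      ∀ a b, M a b = ∑ j, ∑ ℓ, D j ℓ * U₁ a j * U₂ b ℓ := by
  obtain ⟨G₁, hG₁⟩ := exists_retraction U₁
  obtain ⟨G₂, hG₂⟩ := exists_retraction U₂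
  set C : Fin k₁ → ι₂ → ℝ := fun j b => G₁ (fun a => M a b) j with hC
  have hMC : ∀ a b, M a b = ∑ j, U₁ a j * C j b := by
    intro a b
    have := hG₁ _ (hcol b)
    have := congrFun this a
    simpa [Matrix.mulVec, dotProduct, C] using this.symm
  -- each row of C lies in the column space of U₂
  have hCrow : ∀ j, (fun b => C j b) ∈ LinearMap.range U₂.mulVecLin := by
    intro j
    have hdecomp : (fun b => C j b) =
        ∑ a : ι₁, (G₁ (Pi.single a 1 : ι₁ → ℝ) j) • (fun b => M a b) := by
      funext b
      have hx : (fun a => M a b) = ∑ a : ι₁, (M a b) • (Pi.single a 1 : ι₁ → ℝ) := by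
        funext a'
        simp [Finset.sum_apply, Pi.single_apply, mul_comm]
      have : G₁ (fun a => M a b) = ∑ a : ι₁, (M a b) • G₁ (Pi.single a 1 : ι₁ → ℝ) := by
        rw [hx]; simp [map_sum]
      simp only [C, this, Finset.sum_apply, Pi.smul_apply, smul_eq_mul]
      exact Finset.sum_congr rfl fun a _ => by ring
    rw [hdecomp]
    exact Submodule.sum_mem _ fun a _ => Submodule.smul_mem _ _ (hrow a)
  refine ⟨fun j ℓ => G₂ (fun b => C j b) ℓ, fun a b => ?_⟩
  rw [hMC a b]
  refine Finset.sum_congr rfl fun j _ => ?_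
  have := congrFun (hG₂ _ (hCrow j)) b
  simp only [Matrix.mulVec, dotProduct] at this
  rw [← this, Finset.mul_sum]
  exact Finset.sum_congr rfl fun ℓ _ => by ring

/-- the nestedness property guaranteeing the existence of the
transfer tensors of the Hierarchical Tucker format: if the column space of
`U₁` contains the column space of the matricization `M₁(A)` and the column
space of `U₂` contains that of `M₂(A)`, then every column of `M₁₂(A)` lies in
the span of Kronecker products of columns of `U₁` with columns of `U₂`, and
every matrix `U` whose column space is contained in that of `M₁₂(A)` is the
transfer combination of `(U₁, U₂)` by some coefficient array `B`. -/
theorem nestedness_transfer_exists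
    {ι₁ ι₂ J : Type*} [Fintype ι₁] [Fintype ι₂] [Fintype J]
    {k k₁ k₂ : ℕ}
    (A : ι₁ → ι₂ → J → ℝ)
    (U₁ : Matrix ι₁ (Fin k₁) ℝ) (U₂ : Matrix ι₂ (Fin k₂) ℝ)
    (h₁ : LinearMap.range
        (Matrix.mulVecLin (Matrix.of fun (a : ι₁) (bc : ι₂ × J) => A a bc.1 bc.2)) ≤
      LinearMap.range U₁.mulVecLin)
    (h₂ : LinearMap.range
        (Matrix.mulVecLin (Matrix.of fun (b : ι₂) (ac : ι₁ × J) => A ac.1 b ac.2)) ≤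
      LinearMap.range U₂.mulVecLin) :
    (∀ c : J,
      (fun ab : ι₁ × ι₂ => A ab.1 ab.2 c) ∈
        Submodule.span ℝ
          {w : ι₁ × ι₂ → ℝ | ∃ (j : Fin k₁) (ℓ : Fin k₂),
            w = fun ab => U₁ ab.1 j * U₂ ab.2 ℓ}) ∧
    ∀ U : Matrix (ι₁ × ι₂) (Fin k) ℝ,
      LinearMap.range U.mulVecLin ≤
        LinearMap.range
          (Matrix.mulVecLin (Matrix.of fun (ab : ι₁ × ι₂) (c : J) => A ab.1 ab.2 c)) →
      ∃ B : Fin k → Fin k₁ → Fin k₂ → ℝ,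
        ∀ (a : ι₁) (b : ι₂) (i : Fin k),
          U (a, b) i = ∑ j, ∑ ℓ, B i j ℓ * U₁ a j * U₂ b ℓ := by
  classical
  -- columns of A (in mode 1) lie in the column space of U₁
  have hcolA : ∀ (b : ι₂) (c : J),
      (fun a => A a b c) ∈ LinearMap.range U₁.mulVecLin := by
    intro b c
    apply h₁
    refine ⟨Pi.single (b, c) 1, ?_⟩
    funext a
    simp [Matrix.mulVecLin_apply, Matrix.mulVec, dotProduct, Pi.single_apply]
  have hrowA : ∀ (a : ι₁) (c : J),
      (fun b => A a b c) ∈ LinearMap.range U₂.mulVecLin := by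
    intro a c
    apply h₂
    refine ⟨Pi.single (a, c) 1, ?_⟩
    funext b
    simp [Matrix.mulVecLin_apply, Matrix.mulVec, dotProduct, Pi.single_apply]
  constructor
  · intro c
    obtain ⟨D, hD⟩ := key_factor U₁ U₂ (fun a b => A a b c)
      (fun b => hcolA b c) (fun a => hrowA a c)
    have heq : (fun ab : ι₁ × ι₂ => A ab.1 ab.2 c) =
        ∑ j, ∑ ℓ, D j ℓ • (fun ab : ι₁ × ι₂ => U₁ ab.1 j * U₂ ab.2 ℓ) := by
      funext ab
      simp only [Finset.sum_apply, Pi.smul_apply, smul_eq_mul]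
      rw [hD ab.1 ab.2]
      exact Finset.sum_congr rfl fun j _ => Finset.sum_congr rfl fun ℓ _ => by ring
    rw [heq]
    refine Submodule.sum_mem _ fun j _ => Submodule.sum_mem _ fun ℓ _ =>
      Submodule.smul_mem _ _ (Submodule.subset_span ⟨j, ℓ, rfl⟩)
  · intro U hU
    -- each column of U is a linear combination of columns of M₁₂(A)
    have hUcol : ∀ i : Fin k, ∃ v : J → ℝ,
        ∀ ab : ι₁ × ι₂, U ab i = ∑ c, v c * A ab.1 ab.2 c := by
      intro i
      obtain ⟨v, hv⟩ := hU ⟨Pi.single i 1, rfl⟩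
      refine ⟨v, fun ab => ?_⟩
      have h1 := congrFun hv ab
      simp only [Matrix.mulVecLin_apply, Matrix.mulVec, dotProduct, Matrix.of_apply,
        Pi.single_apply] at h1
      rw [show U ab i = ∑ i', U ab i' * if i' = i then (1:ℝ) else 0 by simp]
      rw [← h1]
      exact Finset.sum_congr rfl fun c _ => by ring
    choose v hv using hUcol
    have key : ∀ i : Fin k, ∃ D : Fin k₁ → Fin k₂ → ℝ,
        ∀ a b, U (a, b) i = ∑ j, ∑ ℓ, D j ℓ * U₁ a j * U₂ b ℓ := by
      intro i
      obtain ⟨D, hD⟩ := key_factor U₁ U₂ (fun a b => U (a, b) i)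
        (fun b => by
          have : (fun a => U (a, b) i) = ∑ c, (v i c) • (fun a => A a b c) := by
            funext a
            simpa [Finset.sum_apply, mul_comm] using hv i (a, b)
          rw [this]
          exact Submodule.sum_mem _ fun c _ => Submodule.smul_mem _ _ (hcolA b c))
        (fun a => by
          have : (fun b => U (a, b) i) = ∑ c, (v i c) • (fun b => A a b c) := by
            funext b
            simpa [Finset.sum_apply, mul_comm] using hv i (a, b)
          rw [this]
          exact Submodule.sum_mem _ fun c _ => Submodule.smul_mem _ _ (hrowA a c))
      exact ⟨D, hD⟩
    choose B hB using key
    exact ⟨B, fun a b i => hB i a b⟩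
end
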